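/- arXiv:2012.10895 — 4 statements merged into one kernel-verified Lean document; each statement's English description precedes it below -/
import Mathlib

section
/- Let K be a commutative ring with identity, let n ≥ 1 and m ≥ 2, let h = 1 + Σ_{i=n}^∞ a_i x^i ∈ H(K) and g = x + Σ_{j=m}^∞ b_j x^j ∈ N(K). Then the product (h∘g)·h^{-1} (computed in H(K)) lies in H^{m+n−1}(K), i.e. its coefficients in all degrees 1, …, m+n−2 vanish, and its coefficient of x^{m+n−1} equals n·a_n·b_m. -/
/-!
Write `h = 1 + Xⁿ u` and `g = X + b Xᵐ + O(Xᵐ⁺¹)`. Substitution is a ring homomorphism, so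
`h ∘ g = 1 + gⁿ (u ∘ g)`. Here `gⁿ = Xⁿ + n b Xⁿ⁺ᵐ⁻¹ + O(Xⁿ⁺ᵐ)`, and `u ∘ g ≡ u mod Xᵐ` because
`g - X` divides every `gᵈ - Xᵈ`. Hence `h ∘ g = h + n b Xⁿ⁺ᵐ⁻¹ u + O(Xⁿ⁺ᵐ)`, and multiplying by
`h⁻¹ = 1 + O(X)` gives `(h ∘ g) h⁻¹ = 1 + n aₙ b Xⁿ⁺ᵐ⁻¹ + O(Xⁿ⁺ᵐ)`.
-/

open PowerSeries Finset

namespace RiordanPaper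

variable {K : Type*} [CommRing K]

noncomputable def comp (f g : PowerSeries K) : PowerSeries K :=
  PowerSeries.mk fun n => ∑ d ∈ Finset.range (n + 1), coeff d f * coeff n (g ^ d)

lemma coeff_comp (f g : PowerSeries K) (n : ℕ) :
    coeff n (comp f g) = ∑ d ∈ Finset.range (n + 1), coeff d f * coeff n (g ^ d) := by
  simp [comp]

lemma coeff_pow_eq_zero {g : PowerSeries K} (hg : constantCoeff g = 0) {n d : ℕ}
    (h : n < d) : coeff n (g ^ d) = 0 := by
  have hdvd : (X : PowerSeries K) ^ d ∣ g ^ d :=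
    pow_dvd_pow_of_dvd (PowerSeries.X_dvd_iff.2 hg) d
  exact (PowerSeries.X_pow_dvd_iff.1 hdvd) n h

lemma coeff_comp_of_lt {g : PowerSeries K} (hg : constantCoeff g = 0)
    (f : PowerSeries K) {n N : ℕ} (hn : n < N) :
    coeff n (comp f g) = ∑ d ∈ Finset.range N, coeff d f * coeff n (g ^ d) := by
  rw [coeff_comp]
  apply Finset.sum_subset
  · intro d hd
    simp only [Finset.mem_range] at hd ⊢
    omega
  · intro d _ hd'
    simp only [Finset.mem_range] at hd'
    rw [coeff_pow_eq_zero hg (by omega), mul_zero]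

lemma coeff_eval₂ {g : PowerSeries K} (hg : constantCoeff g = 0)
    (P : Polynomial K) (n : ℕ) :
    coeff n (Polynomial.eval₂ C g P)
      = ∑ d ∈ Finset.range (n + 1), P.coeff d * coeff n (g ^ d) := by
  classical
  have h1 : P.natDegree < max (n + 1) (P.natDegree + 1) :=
    lt_of_lt_of_le (Nat.lt_succ_self _) (le_max_right _ _)
  rw [Polynomial.eval₂_eq_sum_range' C h1 g, map_sum]
  have h2 : ∀ d ∈ Finset.range (max (n + 1) (P.natDegree + 1)),
      coeff n (C (P.coeff d) * g ^ d) = P.coeff d * coeff n (g ^ d) := fun d _ => by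
    rw [coeff_C_mul]
  rw [Finset.sum_congr rfl h2]
  symm
  apply Finset.sum_subset
  · intro d hd
    simp only [Finset.mem_range] at hd ⊢
    omega
  · intro d _ hd'
    simp only [Finset.mem_range] at hd'
    rw [coeff_pow_eq_zero hg (by omega), mul_zero]

lemma coeff_comp_eq_eval₂_trunc {g : PowerSeries K} (hg : constantCoeff g = 0)
    (f : PowerSeries K) {n N : ℕ} (hn : n < N) :
    coeff n (comp f g) = coeff n (Polynomial.eval₂ C g (trunc N f)) := by
  rw [coeff_eval₂ hg, coeff_comp]
  apply Finset.sum_congr rfl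
  intro d hd
  simp only [Finset.mem_range] at hd
  rw [PowerSeries.coeff_trunc, if_pos (by omega)]

lemma mul_comp {g : PowerSeries K} (hg : constantCoeff g = 0) (f₁ f₂ : PowerSeries K) :
    comp (f₁ * f₂) g = comp f₁ g * comp f₂ g := by
  ext n
  have key : coeff n (comp (f₁ * f₂) g)
      = coeff n (Polynomial.eval₂ C g (trunc (n + 1) f₁ * trunc (n + 1) f₂)) := by
    rw [coeff_eval₂ hg, coeff_comp]
    apply Finset.sum_congr rfl
    intro d hd
    simp only [Finset.mem_range] at hd
    congr 1
    rw [Polynomial.coeff_mul, PowerSeries.coeff_mul]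
    apply Finset.sum_congr rfl
    intro ab hab
    rw [Finset.HasAntidiagonal.mem_antidiagonal] at hab
    rw [PowerSeries.coeff_trunc, PowerSeries.coeff_trunc, if_pos (by omega), if_pos (by omega)]
  rw [key, Polynomial.eval₂_mul, PowerSeries.coeff_mul, PowerSeries.coeff_mul]
  apply Finset.sum_congr rfl
  intro ab hab
  rw [Finset.HasAntidiagonal.mem_antidiagonal] at hab
  rw [← coeff_comp_eq_eval₂_trunc hg f₁ (show ab.1 < n + 1 by omega),
    ← coeff_comp_eq_eval₂_trunc hg f₂ (show ab.2 < n + 1 by omega)]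

lemma one_comp (g : PowerSeries K) : comp (1 : PowerSeries K) g = 1 := by
  ext n
  rw [coeff_comp, Finset.sum_eq_single 0]
  · simp
  · intro d _ hd0
    simp [PowerSeries.coeff_one, hd0]
  · intro h
    simp at h

lemma comp_X (f : PowerSeries K) : comp f X = f := by
  ext n
  rw [coeff_comp, Finset.sum_eq_single n]
  · rw [coeff_X_pow, if_pos rfl, mul_one]
  · intro d _ hdn
    rw [coeff_X_pow, if_neg (fun h => hdn h.symm), mul_zero]
  · intro h
    simp at h

lemma X_comp {g : PowerSeries K} (hg : constantCoeff g = 0) : comp X g = g := by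
  ext n
  rcases Nat.eq_zero_or_pos n with hn | hn
  · subst hn
    rw [coeff_comp]
    simp [PowerSeries.coeff_X, coeff_zero_eq_constantCoeff_apply, hg]
  · rw [coeff_comp, Finset.sum_eq_single 1]
    · rw [coeff_one_X, pow_one, one_mul]
    · intro d _ hd1
      rw [PowerSeries.coeff_X, if_neg hd1, zero_mul]
    · intro h
      simp only [Finset.mem_range] at h
      omega

lemma constantCoeff_comp (f g : PowerSeries K) :
    constantCoeff (comp f g) = constantCoeff f := by
  rw [← coeff_zero_eq_constantCoeff_apply, coeff_comp]
  simp

lemma coeff_one_comp (f g : PowerSeries K) :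
    coeff 1 (comp f g) = coeff 1 f * coeff 1 g := by
  rw [coeff_comp]
  have : Finset.range 2 = {0, 1} := rfl
  rw [this, Finset.sum_insert (by simp), Finset.sum_singleton, pow_zero, pow_one]
  simp [PowerSeries.coeff_one]

lemma comp_assoc {g k : PowerSeries K} (hg : constantCoeff g = 0)
    (hk : constantCoeff k = 0) (f : PowerSeries K) :
    comp (comp f g) k = comp f (comp g k) := by
  have hpow : ∀ e : ℕ, (comp g k) ^ e = comp (g ^ e) k := by
    intro e
    induction e with
    | zero => simp [one_comp]
    | succ m ih => rw [pow_succ, pow_succ, ih, mul_comp hk]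
  ext n
  rw [coeff_comp, coeff_comp]
  have L1 : ∀ d ∈ Finset.range (n + 1), coeff d (comp f g) * coeff n (k ^ d)
      = ∑ e ∈ Finset.range (n + 1), coeff e f * coeff d (g ^ e) * coeff n (k ^ d) := by
    intro d hd
    simp only [Finset.mem_range] at hd
    rw [coeff_comp_of_lt hg f hd, Finset.sum_mul]
  rw [Finset.sum_congr rfl L1, Finset.sum_comm]
  apply Finset.sum_congr rfl
  intro e _
  rw [hpow e, coeff_comp, Finset.mul_sum]
  apply Finset.sum_congr rfl
  intro d _
  ring

lemma add_comp (f₁ f₂ g : PowerSeries K) : comp (f₁ + f₂) g = comp f₁ g + comp f₂ g := by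
  ext n
  simp only [coeff_comp, map_add, add_mul, Finset.sum_add_distrib]

lemma pow_comp {g : PowerSeries K} (hg : constantCoeff g = 0) (f : PowerSeries K) (d : ℕ) :
    comp (f ^ d) g = comp f g ^ d := by
  induction d with
  | zero => rw [pow_zero, pow_zero, one_comp]
  | succ d ih => rw [pow_succ, pow_succ, mul_comp hg, ih]

lemma X_pow_dvd_comp_sub {g : PowerSeries K} {j : ℕ} (hg : X ^ j ∣ g - X) (f : PowerSeries K) :
    X ^ j ∣ comp f g - f := by
  refine X_pow_dvd_iff.2 fun k hk => ?_
  rw [map_sub, sub_eq_zero]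
  calc coeff k (comp f g) = coeff k (comp f X) := by
        rw [coeff_comp, coeff_comp]
        refine Finset.sum_congr rfl fun d _ => congrArg _ ?_
        have hd : X ^ j ∣ g ^ d - X ^ d := hg.trans (sub_dvd_pow_sub_pow g X d)
        rw [← sub_eq_zero, ← map_sub]
        exact X_pow_dvd_iff.1 hd k hk
    _ = coeff k f := by rw [comp_X]

lemma exists_eq_one_add_X_pow_mul {h : PowerSeries K} {n : ℕ} (hh0 : constantCoeff h = 1)
    (hhn : ∀ i, 0 < i → i < n → coeff i h = 0) : ∃ u, h = 1 + X ^ n * u := by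
  obtain ⟨u, hu⟩ : X ^ n ∣ h - 1 := X_pow_dvd_iff.2 fun i hi => by
    rcases Nat.eq_zero_or_pos i with rfl | hi0
    · simp [hh0]
    · simp [hhn i hi0 hi, coeff_one, hi0.ne']
  exact ⟨u, by linear_combination hu⟩

lemma exists_eq_X_add_C_mul_X_pow {g : PowerSeries K} {p : ℕ} (hg0 : constantCoeff g = 0)
    (hg1 : coeff 1 g = 1) (hgm : ∀ j, 1 < j → j < p + 2 → coeff j g = 0) :
    ∃ s, g = X + C (coeff (p + 2) g) * X ^ (p + 2) + X ^ (p + 3) * s := by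
  obtain ⟨s, hs⟩ : X ^ (p + 3) ∣ g - X - C (coeff (p + 2) g) * X ^ (p + 2) := by
    refine X_pow_dvd_iff.2 fun k hk => ?_
    rw [map_sub, map_sub, coeff_C_mul_X_pow, coeff_X]
    rcases Nat.lt_trichotomy k 1 with hk0 | rfl | hk1
    · obtain rfl : k = 0 := by omega
      simp [hg0]
    · simp [hg1]
    · rcases (show k < p + 2 ∨ k = p + 2 by omega) with hkp | rfl
      · simp [hgm k hk1 hkp, hkp.ne, hk1.ne']
      · simp
  exact ⟨s, by linear_combination hs⟩

/-- The exponent `p + 2 ≥ 2` is what makes this work: the cross term `d b ^ 2 X ^ (d + 2 p + 3)`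
already has order `≥ d + p + 3`. -/
lemma exists_pow_X_add_C_mul_X_pow (b : K) (s : PowerSeries K) (p d : ℕ) :
    ∃ t, (X + C b * X ^ (p + 2) + X ^ (p + 3) * s) ^ d
      = X ^ d + C (d * b) * X ^ (d + p + 1) + X ^ (d + p + 2) * t := by
  induction d with
  | zero => exact ⟨0, by simp⟩
  | succ d ih =>
    obtain ⟨t, ht⟩ := ih
    refine ⟨t + C (d * b ^ 2) * X ^ p + C b * X ^ (p + 1) * t + s
      + C (d * b) * X ^ (p + 1) * s + X ^ (p + 2) * s * t, ?_⟩
    rw [pow_succ', ht]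
    simp only [Nat.cast_succ, map_add, map_mul, map_pow, map_one]
    ring

theorem subst_mul_inv_mem_general (K : Type*) [CommRing K] (n m : ℕ) (hm : 2 ≤ m)
    (h hinv g : PowerSeries K)
    (hh0 : constantCoeff h = 1)
    (hhn : ∀ i, 0 < i → i < n → coeff i h = 0)
    (hmul : h * hinv = 1)
    (hg0 : constantCoeff g = 0) (hg1 : coeff 1 g = 1)
    (hgm : ∀ j, 1 < j → j < m → coeff j g = 0) :
    constantCoeff (comp h g * hinv) = 1 ∧
    (∀ k, 0 < k → k < m + n - 1 → coeff k (comp h g * hinv) = 0) ∧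
    coeff (m + n - 1) (comp h g * hinv)
      = (n : K) * coeff n h * coeff m g := by
  obtain ⟨p, rfl⟩ : ∃ p, m = p + 2 := ⟨m - 2, by omega⟩
  rw [show p + 2 + n - 1 = n + p + 1 by omega]
  obtain ⟨u, hu⟩ := exists_eq_one_add_X_pow_mul hh0 hhn
  obtain ⟨s, hs⟩ := exists_eq_X_add_C_mul_X_pow hg0 hg1 hgm
  set b := coeff (p + 2) g
  obtain ⟨t, ht⟩ := exists_pow_X_add_C_mul_X_pow b s p n
  rw [← hs] at ht
  obtain ⟨v, hv⟩ : X ^ (p + 2) ∣ comp u g - u :=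
    X_pow_dvd_comp_sub ⟨C b + X * s, by rw [hs]; ring⟩ u
  have hcomp : comp h g = 1 + g ^ n * comp u g := by
    rw [hu, add_comp, one_comp, mul_comp hg0, pow_comp hg0, X_comp hg0]
  obtain ⟨w, hw⟩ :
      ∃ w, comp h g * hinv = 1 + X ^ (n + p + 1) * ((C (n * b) * u + X * w) * hinv) :=
    ⟨t * u + v + C (n * b) * X ^ (p + 1) * v + X ^ (p + 2) * t * v, by
      rw [hcomp, ht, show comp u g = u + X ^ (p + 2) * v by linear_combination hv]
      linear_combination hmul - hinv * hu⟩
  have hinv0 : constantCoeff hinv = 1 := by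
    simpa [hh0] using congrArg constantCoeff hmul
  have hcoeff_n : (n : K) * coeff n h = n * constantCoeff u := by
    rcases Nat.eq_zero_or_pos n with rfl | hn0
    · simp
    · simp [hu, coeff_one, hn0.ne', coeff_X_pow_mul']
  rw [hw]
  refine ⟨by simp, fun k hk0 hk => ?_, ?_⟩
  · simp [coeff_X_pow_mul', coeff_one, hk0.ne', not_le.2 hk]
  · rw [hcoeff_n]
    simp [coeff_X_pow_mul', coeff_one, hinv0, mul_right_comm]

/-- for `h = 1 + ∑_{i ≥ n} aᵢxⁱ ∈ H(K)` and `g = x + ∑_{j ≥ m} bⱼxʲ ∈ N(K)`,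
the product `(h ∘ g) · h⁻¹` lies in `H^{m+n-1}(K)` and its coefficient of `x^{m+n-1}`
is `n·aₙ·bₘ`. -/
theorem subst_mul_inv_mem (K : Type*) [CommRing K] (n m : ℕ) (hn : 1 ≤ n) (hm : 2 ≤ m)
    (h hinv g : PowerSeries K)
    (hh0 : constantCoeff h = 1)
    (hhn : ∀ i, 0 < i → i < n → coeff i h = 0)
    (hmul : h * hinv = 1)
    (hg0 : constantCoeff g = 0) (hg1 : coeff 1 g = 1)
    (hgm : ∀ j, 1 < j → j < m → coeff j g = 0) :
    constantCoeff (comp h g * hinv) = 1 ∧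
    (∀ k, 0 < k → k < m + n - 1 → coeff k (comp h g * hinv) = 0) ∧
    coeff (m + n - 1) (comp h g * hinv)
      = (n : K) * coeff n h * coeff m g :=
  subst_mul_inv_mem_general K n m hm h hinv g hh0 hhn hmul hg0 hg1 hgm

end RiordanPaper
end

section
/- Let K be a commutative ring with identity and let m_1, n_1, m_2, n_2 ∈ ℕ satisfy m_2 + n_1 ≥ m_1 ≥ m_2 and n_1 ≥ n_2. Then R^{m_1,n_1}(K) is a normal subgroup of R^{m_2,n_2}(K). -/
open PowerSeries Finset

namespace RiordanPaper

variable {K : Type*} [CommRing K]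

/-- An element of the Riordan group: a pair `(h, g)` with
`h = 1 + a₁x + ⋯` and `g = x + b₂x² + ⋯`. -/
@[ext]
structure RiordanElem (K : Type*) [CommRing K] where
  h : PowerSeries K
  g : PowerSeries K
  h_zero : constantCoeff h = 1
  g_zero : constantCoeff g = 0
  g_one : coeff 1 g = 1

namespace RiordanElem

noncomputable instance : Mul (RiordanElem K) :=
  ⟨fun a b => ⟨a.h * comp b.h a.g, comp b.g a.g,
    by rw [map_mul, a.h_zero, one_mul, constantCoeff_comp, b.h_zero],
    by rw [constantCoeff_comp, b.g_zero],
    by rw [coeff_one_comp, b.g_one, a.g_one, one_mul]⟩⟩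

noncomputable instance : One (RiordanElem K) :=
  ⟨⟨1, X, map_one _, constantCoeff_X, coeff_one_X⟩⟩

@[simp] lemma mul_h (a b : RiordanElem K) : (a * b).h = a.h * comp b.h a.g := rfl
@[simp] lemma mul_g (a b : RiordanElem K) : (a * b).g = comp b.g a.g := rfl
@[simp] lemma one_h : (1 : RiordanElem K).h = 1 := rfl
@[simp] lemma one_g : (1 : RiordanElem K).g = X := rfl

noncomputable instance instMonoid : Monoid (RiordanElem K) where
  mul_assoc a b c := by
    ext1
    · show (a.h * comp b.h a.g) * comp c.h (comp b.g a.g)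
        = a.h * comp (b.h * comp c.h b.g) a.g
      rw [mul_comp a.g_zero, ← comp_assoc b.g_zero a.g_zero, mul_assoc]
    · show comp c.g (comp b.g a.g) = comp (comp c.g b.g) a.g
      rw [comp_assoc b.g_zero a.g_zero]
  one_mul a := by
    ext1
    · show (1 : PowerSeries K) * comp a.h X = a.h
      rw [comp_X, one_mul]
    · show comp a.g X = a.g
      exact comp_X a.g
  mul_one a := by
    ext1
    · show a.h * comp 1 a.g = a.h
      rw [one_comp, mul_one]
    · show comp X a.g = a.g
      exact X_comp a.g_zero

end RiordanElem

/-- The Riordan group over `K`, realized as the units of the Riordan monoid. -/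
noncomputable abbrev RiordanGroup (K : Type*) [CommRing K] := (RiordanElem K)ˣ

/-- An element of the Nottingham group: `g = x + b₂x² + ⋯`. -/
@[ext]
structure NottinghamElem (K : Type*) [CommRing K] where
  g : PowerSeries K
  g_zero : constantCoeff g = 0
  g_one : coeff 1 g = 1

namespace NottinghamElem

noncomputable instance : Mul (NottinghamElem K) :=
  ⟨fun a b => ⟨comp b.g a.g,
    by rw [constantCoeff_comp, b.g_zero],
    by rw [coeff_one_comp, b.g_one, a.g_one, one_mul]⟩⟩

noncomputable instance : One (NottinghamElem K) :=
  ⟨⟨X, constantCoeff_X, coeff_one_X⟩⟩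

@[simp] lemma mul_g (a b : NottinghamElem K) : (a * b).g = comp b.g a.g := rfl
@[simp] lemma one_g : (1 : NottinghamElem K).g = X := rfl

noncomputable instance instMonoid : Monoid (NottinghamElem K) where
  mul_assoc a b c := by
    ext1
    show comp c.g (comp b.g a.g) = comp (comp c.g b.g) a.g
    rw [comp_assoc b.g_zero a.g_zero]
  one_mul a := by
    ext1
    show comp a.g X = a.g
    exact comp_X a.g
  mul_one a := by
    ext1
    show comp X a.g = a.g
    exact X_comp a.g_zero

end NottinghamElem

/-- The Nottingham group over `K`, realized as the units of the Nottingham monoid. -/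
noncomputable abbrev NottinghamGroup (K : Type*) [CommRing K] := (NottinghamElem K)ˣ

/-- `h` belongs to `H^n(K)`: the coefficients in degrees `1,…,n-1` vanish
(the constant-coefficient-one condition being imposed separately). -/
def IsHn (n : ℕ) (f : PowerSeries K) : Prop := ∀ i, 0 < i → i < n → coeff i f = 0

/-- `g` belongs to `N^n(K)`: the coefficients in degrees `2,…,n` vanish
(the conditions at degree `0`, `1` being imposed separately). -/
def IsNn (n : ℕ) (g : PowerSeries K) : Prop := ∀ j, 1 < j → j ≤ n → coeff j g = 0

/-- The subset `R^{m,n}(K) = H^m(K) ⋊ N^n(K)` of the Riordan group. -/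
def Rmn (K : Type*) [CommRing K] (m n : ℕ) : Set (RiordanGroup K) :=
  {u | IsHn m ((u : RiordanElem K).h) ∧ IsNn n ((u : RiordanElem K).g)}

/-- The subset `R^n(K) = H^n(K) ⋊ N^n(K)` of the Riordan group. -/
def Rn (K : Type*) [CommRing K] (n : ℕ) : Set (RiordanGroup K) := Rmn K n n

theorem pow_add_dvd_pow_succ_sub_pow_succ {R : Type*} [CommRing R] {x a b : R} {N : ℕ}
    (ha : x ∣ a) (hb : x ∣ b) (hab : x ^ N ∣ a - b) (k : ℕ) :
    x ^ (k + N) ∣ a ^ (k + 1) - b ^ (k + 1) := by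
  rw [← geom_sum₂_mul, pow_add]
  refine mul_dvd_mul (Finset.dvd_sum fun i hi => ?_) hab
  have hi : i + (k + 1 - 1 - i) = k := by simp only [Finset.mem_range] at hi; omega
  have := mul_dvd_mul (pow_dvd_pow_of_dvd ha i) (pow_dvd_pow_of_dvd hb (k + 1 - 1 - i))
  rwa [← pow_add, hi] at this

lemma comp_sub (f₁ f₂ g : PowerSeries K) :
    comp (f₁ - f₂) g = comp f₁ g - comp f₂ g := by
  ext n
  simp only [map_sub, coeff_comp, ← Finset.sum_sub_distrib, sub_mul]

lemma comp_sub_one (f g : PowerSeries K) : comp (f - 1) g = comp f g - 1 := by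
  rw [comp_sub, one_comp]

lemma comp_sub_X {g : PowerSeries K} (hg : constantCoeff g = 0) (f : PowerSeries K) :
    comp (f - X) g = comp f g - g := by
  rw [comp_sub, X_comp hg]

lemma X_pow_comp {g : PowerSeries K} (hg : constantCoeff g = 0) (k : ℕ) :
    comp ((X : PowerSeries K) ^ k) g = g ^ k := by
  induction k with
  | zero => exact one_comp g
  | succ k ih => rw [pow_succ, pow_succ, mul_comp hg, ih, X_comp hg]

lemma X_pow_dvd_comp {f g : PowerSeries K} (hg : constantCoeff g = 0) {m : ℕ}
    (hf : (X : PowerSeries K) ^ m ∣ f) : (X : PowerSeries K) ^ m ∣ comp f g := by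
  obtain ⟨q, rfl⟩ := hf
  rw [mul_comp hg, X_pow_comp hg]
  exact dvd_mul_of_dvd_left (pow_dvd_pow_of_dvd (X_dvd_iff.2 hg) m) _

lemma X_pow_dvd_comp_sub_comp (f : PowerSeries K) {w w' : PowerSeries K} {N : ℕ}
    (hd : (X : PowerSeries K) ^ N ∣ w - w') :
    (X : PowerSeries K) ^ N ∣ comp f w - comp f w' := by
  rw [X_pow_dvd_iff]
  intro i hi
  rw [map_sub, coeff_comp, coeff_comp, ← Finset.sum_sub_distrib]
  refine Finset.sum_eq_zero fun d _ => ?_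
  rw [← mul_sub, ← map_sub,
    X_pow_dvd_iff.1 (hd.trans (sub_dvd_pow_sub_pow w w' d)) i hi, mul_zero]

lemma X_pow_add_dvd_comp_sub_comp {f w w' : PowerSeries K} {m N : ℕ}
    (hf : (X : PowerSeries K) ^ m ∣ f - 1) (hw : constantCoeff w = 0)
    (hw' : constantCoeff w' = 0) (hd : (X : PowerSeries K) ^ (N + 1) ∣ w - w') :
    (X : PowerSeries K) ^ (m + N) ∣ comp f w - comp f w' := by
  obtain ⟨q, hq⟩ := hf
  have hcomp : ∀ v : PowerSeries K, constantCoeff v = 0 → comp f v = 1 + v ^ m * comp q v := by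
    intro v hv
    rw [← sub_eq_iff_eq_add', ← comp_sub_one, hq, mul_comp hv, X_pow_comp hv]
  rw [hcomp w hw, hcomp w' hw',
    show ∀ a b c d : PowerSeries K, 1 + a * c - (1 + b * d) = a * (c - d) + (a - b) * d by
      intros; ring]
  refine dvd_add ?_ (dvd_mul_of_dvd_left ?_ _)
  · refine (pow_dvd_pow X (show m + N ≤ m + (N + 1) by omega)).trans ?_
    rw [pow_add]
    exact mul_dvd_mul (pow_dvd_pow_of_dvd (X_dvd_iff.2 hw) m) (X_pow_dvd_comp_sub_comp q hd)
  · rcases m with _ | k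
    · simp
    · rw [show k + 1 + N = k + (N + 1) by omega]
      exact pow_add_dvd_pow_succ_sub_pow_succ (X_dvd_iff.2 hw) (X_dvd_iff.2 hw') hd k

lemma isHn_iff {m : ℕ} {h : PowerSeries K} (h0 : constantCoeff h = 1) :
    IsHn m h ↔ (X : PowerSeries K) ^ m ∣ h - 1 := by
  rw [X_pow_dvd_iff]
  refine forall_congr' fun i => ?_
  rcases Nat.eq_zero_or_pos i with rfl | hi
  · simp [h0]
  · simp [coeff_one, hi, hi.ne']

lemma isNn_iff {n : ℕ} {g : PowerSeries K} (g0 : constantCoeff g = 0) (g1 : coeff 1 g = 1) :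
    IsNn n g ↔ (X : PowerSeries K) ^ (n + 1) ∣ g - X := by
  rw [X_pow_dvd_iff]
  refine forall_congr' fun j => ?_
  match j with
  | 0 => simp [g0]
  | 1 => simp [g1]
  | j + 2 => simp [coeff_X]

namespace RiordanElem

lemma h_mul_comp_h_eq_one {a b : RiordanElem K} (hab : a * b = 1) : a.h * comp b.h a.g = 1 :=
  congrArg RiordanElem.h hab

lemma comp_g_eq_X {a b : RiordanElem K} (hab : a * b = 1) : comp b.g a.g = X :=
  congrArg RiordanElem.g hab

end RiordanElem

lemma mem_Rmn_iff {m n : ℕ} {u : RiordanGroup K} :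
    u ∈ Rmn K m n ↔ (X : PowerSeries K) ^ m ∣ (u : RiordanElem K).h - 1 ∧
      (X : PowerSeries K) ^ (n + 1) ∣ (u : RiordanElem K).g - X :=
  and_congr (isHn_iff (u : RiordanElem K).h_zero)
    (isNn_iff (u : RiordanElem K).g_zero (u : RiordanElem K).g_one)

lemma Rmn_subset_Rmn {m₁ n₁ m₂ n₂ : ℕ} (hm : m₂ ≤ m₁) (hn : n₂ ≤ n₁) :
    Rmn K m₁ n₁ ⊆ Rmn K m₂ n₂ := fun _ hu =>
  mem_Rmn_iff.2 ⟨(pow_dvd_pow X hm).trans (mem_Rmn_iff.1 hu).1,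
    (pow_dvd_pow X (by omega)).trans (mem_Rmn_iff.1 hu).2⟩

lemma mul_mem_Rmn {m n : ℕ} {u v : RiordanGroup K} (hu : u ∈ Rmn K m n) (hv : v ∈ Rmn K m n) :
    u * v ∈ Rmn K m n := by
  obtain ⟨hah, hag⟩ := mem_Rmn_iff.1 hu
  obtain ⟨hbh, hbg⟩ := mem_Rmn_iff.1 hv
  set a := (u : RiordanElem K)
  set b := (v : RiordanElem K)
  refine mem_Rmn_iff.2 ⟨?_, ?_⟩
  · show X ^ m ∣ a.h * comp b.h a.g - 1
    rw [show a.h * comp b.h a.g - 1 = (a.h - 1) * comp b.h a.g + (comp b.h a.g - 1) by ring,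
      ← comp_sub_one]
    exact dvd_add (hah.mul_right _) (X_pow_dvd_comp a.g_zero hbh)
  · show X ^ (n + 1) ∣ comp b.g a.g - X
    rw [show comp b.g a.g - X = (comp b.g a.g - a.g) + (a.g - X) by ring, ← comp_sub_X a.g_zero]
    exact dvd_add (X_pow_dvd_comp a.g_zero hbg) hag

lemma inv_mem_Rmn {m n : ℕ} {u : RiordanGroup K} (hu : u ∈ Rmn K m n) :
    u⁻¹ ∈ Rmn K m n := by
  obtain ⟨hah, hag⟩ := mem_Rmn_iff.1 hu
  set a := (u : RiordanElem K)
  set b := ((u⁻¹ : RiordanGroup K) : RiordanElem K)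
  have hba : b * a = 1 := u.inv_mul
  refine mem_Rmn_iff.2 ⟨?_, ?_⟩
  · rw [show b.h - 1 = -(b.h * (comp a.h b.g - 1)) by
      linear_combination RiordanElem.h_mul_comp_h_eq_one hba, dvd_neg, ← comp_sub_one]
    exact (X_pow_dvd_comp b.g_zero hah).mul_left _
  · rw [show b.g - X = -(comp a.g b.g - b.g) by
      linear_combination RiordanElem.comp_g_eq_X hba, dvd_neg, ← comp_sub_X b.g_zero]
    exact X_pow_dvd_comp b.g_zero hag

def RmnSubgroup (K : Type*) [CommRing K] (m n : ℕ) : Subgroup (RiordanGroup K) where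
  carrier := Rmn K m n
  one_mem' := mem_Rmn_iff.2 ⟨by simp, by simp⟩
  mul_mem' := mul_mem_Rmn
  inv_mem' := inv_mem_Rmn

/-- The only delicate term is `u⁻¹.h ∘ (v.g ∘ u.g) - u⁻¹.h ∘ u.g`: it is divisible by
`X ^ (m₂ + n₁)` because `u⁻¹.h ≡ 1 mod X ^ m₂` and `v.g ∘ u.g ≡ u.g mod X ^ (n₁ + 1)`. -/
lemma conj_mem_Rmn {m₁ n₁ m₂ n₂ : ℕ} (h : m₁ ≤ m₂ + n₁) {u v : RiordanGroup K}
    (hu : u ∈ Rmn K m₂ n₂) (hv : v ∈ Rmn K m₁ n₁) : u * v * u⁻¹ ∈ Rmn K m₁ n₁ := by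
  obtain ⟨hbh, hbg⟩ := mem_Rmn_iff.1 hv
  have hch := (mem_Rmn_iff.1 (inv_mem_Rmn hu)).1
  set a := (u : RiordanElem K)
  set b := (v : RiordanElem K)
  set c := ((u⁻¹ : RiordanGroup K) : RiordanElem K)
  have hac : a * c = 1 := u.mul_inv
  set w := comp b.g a.g
  have hw : constantCoeff w = 0 := by rw [constantCoeff_comp, b.g_zero]
  have hwa : X ^ (n₁ + 1) ∣ w - a.g := by
    rw [← comp_sub_X a.g_zero]
    exact X_pow_dvd_comp a.g_zero hbg
  refine mem_Rmn_iff.2 ⟨?_, ?_⟩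
  · show X ^ m₁ ∣ a.h * comp b.h a.g * comp c.h w - 1
    rw [show a.h * comp b.h a.g * comp c.h w - 1
        = a.h * comp c.h w * (comp b.h a.g - 1) + a.h * (comp c.h w - comp c.h a.g) by
      linear_combination RiordanElem.h_mul_comp_h_eq_one hac, ← comp_sub_one]
    refine dvd_add ((X_pow_dvd_comp a.g_zero hbh).mul_left _) (Dvd.dvd.mul_left ?_ _)
    exact (pow_dvd_pow X h).trans (X_pow_add_dvd_comp_sub_comp hch hw a.g_zero hwa)
  · show X ^ (n₁ + 1) ∣ comp c.g w - X
    have hc := X_pow_dvd_comp_sub_comp c.g hwa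
    rwa [RiordanElem.comp_g_eq_X hac] at hc

/-- `R^{m₁,n₁}(K)` is a normal subgroup of `R^{m₂,n₂}(K)` whenever
`m₂ + n₁ ≥ m₁ ≥ m₂` and `n₁ ≥ n₂`. -/
theorem Rmn_normal_in_Rmn (K : Type*) [CommRing K] (m₁ n₁ m₂ n₂ : ℕ)
    (h1 : m₁ ≤ m₂ + n₁) (h2 : m₂ ≤ m₁) (h3 : n₂ ≤ n₁) :
    ∃ H₁ H₂ : Subgroup (RiordanGroup K),
      (H₁ : Set (RiordanGroup K)) = Rmn K m₁ n₁ ∧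
      (H₂ : Set (RiordanGroup K)) = Rmn K m₂ n₂ ∧
      H₁ ≤ H₂ ∧ (H₁.subgroupOf H₂).Normal := by
  refine ⟨RmnSubgroup K m₁ n₁, RmnSubgroup K m₂ n₂, rfl, rfl, Rmn_subset_Rmn h2 h3, ?_⟩
  exact ⟨fun v hv u => Subgroup.mem_subgroupOf.2 (conj_mem_Rmn h1 u.2 hv)⟩

end RiordanPaper
end

section
/- Let K be a finite commutative ring with identity. Then for every n ∈ ℕ the quotient group R(K)/R^n(K) is finite. Moreover, if K = F_q is a finite field of characteristic p (p prime), then the order of R(F_q)/R^n(F_q) is a power of p, i.e. each quotient R(F_q)/R^n(F_q) is a finite p-group. -/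
open PowerSeries Finset

namespace RiordanPaper

variable {K : Type*} [CommRing K]

/-!
Every pair `(h, g)` is invertible: `h` is a unit of `K⟦X⟧`, and a compositional inverse of `g`
is found degree by degree. The coefficients of `h` below degree `m` and of `g` up to degree `n`
of a product `a * b` depend only on those of `a` and `b`, and `(h, g)` lies in `R^{m,n}` exactly
when these coefficients agree with those of the identity. Hence `u⁻¹ * v ∈ R^{m,n}` iff `u` and `v`
share the coefficients `h₁, …, h_{m-1}, g₂, …, gₙ`, and since these can be prescribed freely,
`R / R^{m,n}` is in bijection with `K^{(m-1)+(n-1)}`. For `K = 𝔽_q` with `q = p^r` its order is a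
power of `p`.
-/

lemma coeff_self_pow {g : PowerSeries K} (hg : constantCoeff g = 0) (m : ℕ) :
    coeff m (g ^ m) = coeff 1 g ^ m := by
  obtain ⟨q, rfl⟩ := X_dvd_iff.mpr hg
  simp [mul_pow, coeff_X_pow_mul', coeff_succ_X_mul]

/-- Solving `comp f g = X` degree by degree: for `g = X + ⋯` we have `coeff n (g ^ n) = 1`,
so the `n`-th coefficient of `comp f g` is `coeff n f` plus terms in lower coefficients of `f`. -/
noncomputable def compInvCoeff (g : PowerSeries K) : ℕ → K
  | n => (if n = 1 then 1 else 0) -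
      ∑ d ∈ (range n).attach, compInvCoeff g d * coeff n (g ^ (d : ℕ))
  decreasing_by exact mem_range.mp d.2

noncomputable def compInv (g : PowerSeries K) : PowerSeries K := mk (compInvCoeff g)

lemma coeff_compInv (g : PowerSeries K) (n : ℕ) :
    coeff n (compInv g) =
      (if n = 1 then 1 else 0) - ∑ d ∈ range n, coeff d (compInv g) * coeff n (g ^ d) := by
  rw [compInv, coeff_mk, compInvCoeff]
  simp only [coeff_mk]
  rw [sum_attach (range n) fun d => compInvCoeff g d * coeff n (g ^ d)]

lemma constantCoeff_compInv (g : PowerSeries K) : constantCoeff (compInv g) = 0 := by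
  rw [← coeff_zero_eq_constantCoeff_apply, coeff_compInv]
  simp

lemma coeff_one_compInv (g : PowerSeries K) : coeff 1 (compInv g) = 1 := by
  rw [coeff_compInv]
  simp

lemma compInv_comp_self {g : PowerSeries K} (hg0 : constantCoeff g = 0) (hg1 : coeff 1 g = 1) :
    comp (compInv g) g = X := by
  ext n
  rw [coeff_comp, sum_range_succ, coeff_self_pow hg0, hg1, one_pow, mul_one, coeff_compInv,
    coeff_X]
  ring

lemma isUnit_of_forall_exists_mul_eq_one {M : Type*} [Monoid M]
    (h : ∀ a : M, ∃ b, a * b = 1) (a : M) : IsUnit a := by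
  obtain ⟨b, hab⟩ := h a
  obtain ⟨c, hbc⟩ := h b
  obtain rfl : a = c := left_inv_eq_right_inv hab hbc
  exact isUnit_iff_exists.mpr ⟨b, hab, hbc⟩

namespace RiordanElem

lemma exists_mul_eq_one (a : RiordanElem K) : ∃ b : RiordanElem K, a * b = 1 := by
  obtain ⟨w, hw⟩ := (isUnit_iff_constantCoeff.mpr (a.h_zero ▸ isUnit_one)).exists_right_inv
  have hw0 : constantCoeff w = 1 := by simpa [a.h_zero] using congrArg constantCoeff hw
  have hinv := compInv_comp_self a.g_zero a.g_one
  refine ⟨⟨comp w (compInv a.g), compInv a.g, by rw [constantCoeff_comp, hw0],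
    constantCoeff_compInv _, coeff_one_compInv _⟩, ?_⟩
  ext1
  · simp only [mul_h, one_h]
    rw [comp_assoc (constantCoeff_compInv _) a.g_zero, hinv, comp_X, hw]
  · exact hinv

lemma isUnit (a : RiordanElem K) : IsUnit a :=
  isUnit_of_forall_exists_mul_eq_one exists_mul_eq_one a

end RiordanElem

lemma trunc_eq_trunc_iff {n : ℕ} {f f' : PowerSeries K} :
    trunc n f = trunc n f' ↔ ∀ i < n, coeff i f = coeff i f' := by
  simp only [Polynomial.ext_iff, coeff_trunc]
  refine ⟨fun h i hi => by simpa [hi] using h i, fun h i => ?_⟩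
  split_ifs with hi
  exacts [h i hi, rfl]

lemma trunc_comp_eq_of_trunc_eq {n : ℕ} {f f' : PowerSeries K} (g : PowerSeries K)
    (h : trunc n f = trunc n f') : trunc n (comp f g) = trunc n (comp f' g) := by
  rw [trunc_eq_trunc_iff] at h ⊢
  intro i hi
  simp only [coeff_comp]
  exact sum_congr rfl fun d hd => by rw [h d (by simp at hd; omega)]

namespace RiordanElem

variable (m n : ℕ)

noncomputable def coeffData (a : RiordanElem K) : (Set.Ioo 0 m → K) × (Set.Ioc 1 n → K) :=
  (fun i => coeff i a.h, fun j => coeff j a.g)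

variable {m n}

lemma coeffData_eq_iff {a b : RiordanElem K} :
    coeffData m n a = coeffData m n b ↔
      trunc m a.h = trunc m b.h ∧ trunc (n + 1) a.g = trunc (n + 1) b.g := by
  simp only [coeffData, Prod.ext_iff, funext_iff, Subtype.forall, Set.mem_Ioo, Set.mem_Ioc,
    trunc_eq_trunc_iff]
  refine and_congr ⟨fun h i hi => ?_, fun h i hi => h i hi.2⟩
    ⟨fun h j hj => ?_, fun h j hj => h j (by omega)⟩
  · rcases i.eq_zero_or_pos with rfl | hi0
    · simp [a.h_zero, b.h_zero]
    · exact h i ⟨hi0, hi⟩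
  · rcases lt_or_ge 1 j with hj1 | hj1
    · exact h j ⟨hj1, by omega⟩
    · interval_cases j
      · simp [a.g_zero, b.g_zero]
      · rw [a.g_one, b.g_one]

lemma coeffData_mul_left (a : RiordanElem K) {b c : RiordanElem K}
    (h : coeffData m n b = coeffData m n c) : coeffData m n (a * b) = coeffData m n (a * c) := by
  rw [coeffData_eq_iff] at h ⊢
  refine ⟨?_, trunc_comp_eq_of_trunc_eq _ h.2⟩
  rw [mul_h, mul_h, ← trunc_mul_trunc, trunc_comp_eq_of_trunc_eq _ h.1, trunc_mul_trunc]

end RiordanElem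

open RiordanElem

lemma mem_Rmn_iff_s5 {m n : ℕ} {u : RiordanGroup K} :
    u ∈ Rmn K m n ↔ coeffData m n (u : RiordanElem K) = coeffData m n 1 := by
  simp only [Rmn, IsHn, IsNn, Set.mem_ofPred_eq, coeffData, Prod.ext_iff, funext_iff,
    Subtype.forall, Set.mem_Ioo, Set.mem_Ioc, and_imp, one_h, one_g]
  refine and_congr (forall_congr' fun i => ?_) (forall_congr' fun j => ?_)
  · exact imp_congr_right fun hi => imp_congr_right fun _ => by rw [coeff_one, if_neg hi.ne']
  · exact imp_congr_right fun hj => imp_congr_right fun _ => by rw [coeff_X, if_neg hj.ne']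

lemma inv_mul_mem_Rmn_iff {m n : ℕ} {u v : RiordanGroup K} :
    u⁻¹ * v ∈ Rmn K m n ↔
      coeffData m n (u : RiordanElem K) = coeffData m n (v : RiordanElem K) := by
  rw [mem_Rmn_iff_s5]
  refine ⟨fun h => ?_, fun h => ?_⟩
  · simpa using (coeffData_mul_left (u : RiordanElem K) h).symm
  · simpa using coeffData_mul_left ((u⁻¹ : RiordanGroup K) : RiordanElem K) h.symm

lemma coeffData_surjective (m n : ℕ) :
    Function.Surjective fun u : RiordanGroup K => coeffData m n (u : RiordanElem K) := by
  rintro ⟨a, b⟩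
  let h : PowerSeries K :=
    mk fun i => if hi : i ∈ Set.Ioo 0 m then a ⟨i, hi⟩ else if i = 0 then 1 else 0
  let g : PowerSeries K :=
    mk fun j => if hj : j ∈ Set.Ioc 1 n then b ⟨j, hj⟩ else if j = 1 then 1 else 0
  obtain ⟨u, hu⟩ := RiordanElem.isUnit ⟨h, g, by simp [h], by simp [g], by simp [g]⟩
  refine ⟨u, ?_⟩
  simp only [coeffData, hu]
  ext ⟨i, hi⟩
  · simp only [h, coeff_mk, dif_pos hi]
  · simp only [g, coeff_mk, dif_pos hi]

noncomputable def quotientEquivCoeffData {m n : ℕ} {H : Subgroup (RiordanGroup K)}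
    (hH : (H : Set (RiordanGroup K)) = Rmn K m n) :
    RiordanGroup K ⧸ H ≃ (Set.Ioo 0 m → K) × (Set.Ioc 1 n → K) :=
  (Quotient.congrRight fun u v => by
      rw [QuotientGroup.leftRel_apply, ← SetLike.mem_coe, hH, inv_mul_mem_Rmn_iff]
      rfl).trans
    (Setoid.quotientKerEquivOfSurjective _ (coeffData_surjective m n))

lemma card_quotient_of_coe_eq_Rmn {m n : ℕ} {H : Subgroup (RiordanGroup K)}
    (hH : (H : Set (RiordanGroup K)) = Rmn K m n) :
    Nat.card (RiordanGroup K ⧸ H) = Nat.card K ^ (m - 1 + (n - 1)) := by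
  rw [Nat.card_congr (quotientEquivCoeffData hH), Nat.card_prod, Nat.card_fun, Nat.card_fun,
    ← pow_add]
  simp

theorem riordan_quotients_finite_general (p : ℕ) :
    (∀ (K : Type) [CommRing K] [Finite K] (n : ℕ)
      (Hn : Subgroup (RiordanGroup K)), (Hn : Set (RiordanGroup K)) = Rn K n →
        Finite (RiordanGroup K ⧸ Hn)) ∧
    (∀ (K : Type) [Field K] [Finite K] [CharP K p] (n : ℕ)
      (Hn : Subgroup (RiordanGroup K)), (Hn : Set (RiordanGroup K)) = Rn K n →
        ∃ k : ℕ, Nat.card (RiordanGroup K ⧸ Hn) = p ^ k) := by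
  refine ⟨fun K _ _ n Hn hHn => ?_, fun K _ _ _ n Hn hHn => ?_⟩
  · apply Nat.finite_of_card_ne_zero
    rw [card_quotient_of_coe_eq_Rmn hHn]
    exact pow_ne_zero _ Nat.card_pos.ne'
  · have := Fintype.ofFinite K
    obtain ⟨r, -, hr⟩ := FiniteField.card K p
    refine ⟨r * (n - 1 + (n - 1)), ?_⟩
    rw [card_quotient_of_coe_eq_Rmn hHn, Nat.card_eq_fintype_card, hr, pow_mul]

/-- for a finite commutative unital ring `K` the quotients `R(K)/R^n(K)` are
finite, and for a finite field of characteristic `p` their orders are powers of `p`. -/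
theorem riordan_quotients_finite (p : ℕ) (hp : p.Prime) :
    (∀ (K : Type) [CommRing K] [Finite K] (n : ℕ)
      (Hn : Subgroup (RiordanGroup K)), (Hn : Set (RiordanGroup K)) = Rn K n →
        Finite (RiordanGroup K ⧸ Hn)) ∧
    (∀ (K : Type) [Field K] [Finite K] [CharP K p] (n : ℕ)
      (Hn : Subgroup (RiordanGroup K)), (Hn : Set (RiordanGroup K)) = Rn K n →
        ∃ k : ℕ, Nat.card (RiordanGroup K ⧸ Hn) = p ^ k) :=
  riordan_quotients_finite_general p

end RiordanPaper
end

section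
/- Let G be a group with normal subgroups G_1 and G_2, let H be an abelian group with subgroups H_1 and H_2, and let φ : G → Aut(H) be a group homomorphism such that φ(g_i)(H_i) = H_i for all g_i ∈ G_i, i = 1, 2. Let L be the subgroup of H generated by {φ(g_1)(h_2)·h_2^{-1} : g_1 ∈ G_1, h_2 ∈ H_2} ∪ {φ(g_2)(h_1)·h_1^{-1} : g_2 ∈ G_2, h_1 ∈ H_1}. Then: (a) φ(g)(L) = L for every g ∈ [G_1, G_2]; and (b) in the semidirect product H ⋊_φ G one has [H_1 ⋊_φ G_1, H_2 ⋊_φ G_2] = L ⋊_φ [G_1, G_2]. -/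
/-!
Since `G₁` is normal, `⁅G₁, G₂⁆ ≤ G₁`, so (a) reduces to `L` being `φ(G₁)`-invariant. For `g ∈ G₁`,
`φ g (φ g₁ h₂ * h₂⁻¹)` is a quotient of two generators of the same kind, and
`φ g (φ g₂ h₁ * h₁⁻¹) = φ (g g₂ g⁻¹) (φ g h₁) * (φ g h₁)⁻¹` is again a generator, by normality of
`G₂` and `φ(G₁)`-invariance of `H₁`.

For (b), the commutator of `(h₁, g₁) ∈ H₁ ⋊ G₁` and `(h₂, g₂) ∈ H₂ ⋊ G₂` has `G`-component
`⁅g₁, g₂⁆`, and its `H`-component is a generator of `L` of the second kind times the `φ g₁`-image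
of one of the first kind (normality of `G₁` and `G₂` once more). Conversely, the generators of `L`
are the commutators `⁅inr g, inl h⁆`, and `inr ⁅G₁, G₂⁆ = ⁅inr G₁, inr G₂⁆`.
-/

open PowerSeries Finset

namespace RiordanPaper

variable {K : Type*} [CommRing K]


open scoped commutatorElement
open SemidirectProduct

section

variable {G H : Type*} [Group G] [CommGroup H] (φ : G →* MulAut H)

/-- Inside `H ⋊[φ] G` this is the commutator subgroup `⁅inr N, inl A⁆`
(see `commutatorElement_inr_inl`). -/
def actionCommutator (N : Subgroup G) (A : Subgroup H) : Subgroup H :=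
  Subgroup.closure {x | ∃ g ∈ N, ∃ h ∈ A, x = φ g h * h⁻¹}

def mixedCommutator (G₁ : Subgroup G) (H₁ : Subgroup H) (G₂ : Subgroup G) (H₂ : Subgroup H) :
    Subgroup H :=
  actionCommutator φ G₁ H₂ ⊔ actionCommutator φ G₂ H₁

variable {φ} {N : Subgroup G} {A : Subgroup H}

lemma mul_inv_mem_actionCommutator {g : G} {h : H} (hg : g ∈ N) (hh : h ∈ A) :
    φ g h * h⁻¹ ∈ actionCommutator φ N A :=
  Subgroup.subset_closure ⟨g, hg, h, hh, rfl⟩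

lemma actionCommutator_le_comap {f : H →* H}
    (hf : ∀ g ∈ N, ∀ h ∈ A, f (φ g h * h⁻¹) ∈ actionCommutator φ N A) :
    actionCommutator φ N A ≤ (actionCommutator φ N A).comap f := by
  rw [actionCommutator, Subgroup.closure_le]
  rintro _ ⟨g, hg, h, hh, rfl⟩
  exact hf g hg h hh

lemma apply_mem_actionCommutator_of_mem {g : G} {x : H}
    (hg : g ∈ N) (hx : x ∈ actionCommutator φ N A) : φ g x ∈ actionCommutator φ N A := by
  refine actionCommutator_le_comap (f := (φ g).toMonoidHom) (fun k hk h hh => ?_) hx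
  have key : φ g (φ k h * h⁻¹) = (φ (g * k) h * h⁻¹) * (φ g h * h⁻¹)⁻¹ := by
    simp only [map_mul, map_inv, MulAut.mul_apply]
    group
  rw [MulEquiv.coe_toMonoidHom, key]
  exact mul_mem (mul_inv_mem_actionCommutator (mul_mem hg hk) hh)
    (inv_mem (mul_inv_mem_actionCommutator hg hh))

lemma apply_mem_actionCommutator_of_normal [N.Normal] {g : G} {x : H} (hA : ∀ h ∈ A, φ g h ∈ A)
    (hx : x ∈ actionCommutator φ N A) : φ g x ∈ actionCommutator φ N A := by
  refine actionCommutator_le_comap (f := (φ g).toMonoidHom) (fun k hk h hh => ?_) hx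
  have key : φ g (φ k h * h⁻¹) = φ (g * k * g⁻¹) (φ g h) * (φ g h)⁻¹ := by
    simp [MulAut.mul_apply]
  rw [MulEquiv.coe_toMonoidHom, key]
  exact mul_inv_mem_actionCommutator (Subgroup.Normal.conj_mem ‹_› k hk g) (hA h hh)

variable {G₁ G₂ : Subgroup G} {H₁ H₂ : Subgroup H} {P₁ P₂ P₃ : Subgroup (H ⋊[φ] G)}

lemma apply_mem_mixedCommutator [G₂.Normal]
    (hH₁ : ∀ g ∈ G₁, ∀ h ∈ H₁, φ g h ∈ H₁) {g : G} (hg : g ∈ G₁) {x : H}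
    (hx : x ∈ mixedCommutator φ G₁ H₁ G₂ H₂) : φ g x ∈ mixedCommutator φ G₁ H₁ G₂ H₂ := by
  obtain ⟨y, hy, z, hz, rfl⟩ := Subgroup.mem_sup.1 hx
  rw [map_mul]
  exact Subgroup.mul_mem_sup (apply_mem_actionCommutator_of_mem hg hy)
    (apply_mem_actionCommutator_of_normal (hH₁ g hg) hz)

lemma image_eq_of_forall_apply_mem {L : Subgroup H}
    (hL : ∀ g ∈ N, ∀ x ∈ L, φ g x ∈ L) {g : G} (hg : g ∈ N) : φ g '' L = L := by
  refine (Set.image_subset_iff.2 fun x hx => hL g hg x hx).antisymm fun x hx => ?_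
  refine ⟨φ g⁻¹ x, hL g⁻¹ (inv_mem hg) x hx, ?_⟩
  rw [map_inv, MulAut.inv_apply, MulEquiv.apply_symm_apply]

lemma commutatorElement_left (x y : H ⋊[φ] G) :
    (⁅x, y⁆ : H ⋊[φ] G).left = (φ (x.right * y.right * x.right⁻¹) x.left * x.left⁻¹)⁻¹ *
      φ x.right (φ (y.right * x.right⁻¹ * y.right⁻¹) y.left * y.left⁻¹)⁻¹ := by
  simp [commutatorElement_def, MulAut.mul_apply, mul_comm, mul_left_comm, mul_assoc]

lemma commutatorElement_inr_inl (g : G) (h : H) :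
    ⁅(inr g : H ⋊[φ] G), (inl h : H ⋊[φ] G)⁆ = inl (φ g h * h⁻¹) := by
  ext
  · simp [commutatorElement_left, mul_comm]
  · simp [commutatorElement_def]

lemma commutatorElement_right (x y : H ⋊[φ] G) :
    (⁅x, y⁆ : H ⋊[φ] G).right = ⁅x.right, y.right⁆ :=
  map_commutatorElement rightHom x y

lemma actionCommutator_le_comap_inl_commutator {P Q : Subgroup (H ⋊[φ] G)} (hN : N.map inr ≤ P)
    (hA : A.map inl ≤ Q) : actionCommutator φ N A ≤ ⁅P, Q⁆.comap inl := by
  rw [actionCommutator, Subgroup.closure_le]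
  rintro _ ⟨g, hg, h, hh, rfl⟩
  rw [SetLike.mem_coe, Subgroup.mem_comap, ← commutatorElement_inr_inl]
  exact Subgroup.commutator_mem_commutator (hN ⟨g, hg, rfl⟩) (hA ⟨h, hh, rfl⟩)

lemma map_inl_le {P : Subgroup (H ⋊[φ] G)}
    (hP : (P : Set (H ⋊[φ] G)) = {x | x.left ∈ A ∧ x.right ∈ N}) : A.map inl ≤ P := by
  rintro _ ⟨h, hh, rfl⟩
  rw [← SetLike.mem_coe, hP]
  exact ⟨hh, one_mem N⟩

lemma map_inr_le {P : Subgroup (H ⋊[φ] G)}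
    (hP : (P : Set (H ⋊[φ] G)) = {x | x.left ∈ A ∧ x.right ∈ N}) : N.map inr ≤ P := by
  rintro _ ⟨g, hg, rfl⟩
  rw [← SetLike.mem_coe, hP]
  exact ⟨one_mem A, hg⟩

lemma commutator_le_of_coe_eq [G₁.Normal] [G₂.Normal] (hH₁ : ∀ g ∈ G₁, ∀ h ∈ H₁, φ g h ∈ H₁)
    (hP₁ : (P₁ : Set (H ⋊[φ] G)) = {x | x.left ∈ H₁ ∧ x.right ∈ G₁})
    (hP₂ : (P₂ : Set (H ⋊[φ] G)) = {x | x.left ∈ H₂ ∧ x.right ∈ G₂})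
    (hP₃ : (P₃ : Set (H ⋊[φ] G)) =
      {x | x.left ∈ mixedCommutator φ G₁ H₁ G₂ H₂ ∧ x.right ∈ ⁅G₁, G₂⁆}) :
    ⁅P₁, P₂⁆ ≤ P₃ := by
  rw [Subgroup.commutator_le]
  intro x hx y hy
  rw [← SetLike.mem_coe, hP₁] at hx
  rw [← SetLike.mem_coe, hP₂] at hy
  obtain ⟨hx₁, hx₂⟩ := hx
  obtain ⟨hy₁, hy₂⟩ := hy
  rw [← SetLike.mem_coe, hP₃, Set.mem_ofPred_eq, commutatorElement_left, commutatorElement_right]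
  refine ⟨mul_mem (inv_mem (Subgroup.mem_sup_right ?_))
    (apply_mem_mixedCommutator hH₁ hx₂ (inv_mem (Subgroup.mem_sup_left ?_))),
    Subgroup.commutator_mem_commutator hx₂ hy₂⟩
  · exact mul_inv_mem_actionCommutator (Subgroup.Normal.conj_mem ‹_› _ hy₂ _) hx₁
  · exact mul_inv_mem_actionCommutator (Subgroup.Normal.conj_mem ‹_› _ (inv_mem hx₂) _) hy₁

lemma le_commutator_of_coe_eq
    (hP₁ : (P₁ : Set (H ⋊[φ] G)) = {x | x.left ∈ H₁ ∧ x.right ∈ G₁})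
    (hP₂ : (P₂ : Set (H ⋊[φ] G)) = {x | x.left ∈ H₂ ∧ x.right ∈ G₂})
    (hP₃ : (P₃ : Set (H ⋊[φ] G)) =
      {x | x.left ∈ mixedCommutator φ G₁ H₁ G₂ H₂ ∧ x.right ∈ ⁅G₁, G₂⁆}) :
    P₃ ≤ ⁅P₁, P₂⁆ := by
  intro x hx
  rw [← SetLike.mem_coe, hP₃] at hx
  have hleft : mixedCommutator φ G₁ H₁ G₂ H₂ ≤ ⁅P₁, P₂⁆.comap inl := by
    refine sup_le (actionCommutator_le_comap_inl_commutator (map_inr_le hP₁) (map_inl_le hP₂)) ?_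
    rw [Subgroup.commutator_comm]
    exact actionCommutator_le_comap_inl_commutator (map_inr_le hP₂) (map_inl_le hP₁)
  have hright : ⁅G₁, G₂⁆ ≤ ⁅P₁, P₂⁆.comap inr := by
    rw [← Subgroup.map_le_iff_le_comap, Subgroup.map_commutator]
    exact Subgroup.commutator_mono (map_inr_le hP₁) (map_inr_le hP₂)
  rw [← inl_left_mul_inr_right x]
  exact mul_mem (hleft hx.1) (hright hx.2)

end

theorem commutator_of_semidirect_products_general (G : Type*) [Group G] (H : Type*) [CommGroup H]
    (φ : G →* MulAut H) (G₁ G₂ : Subgroup G) [G₁.Normal] [G₂.Normal]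
    (H₁ H₂ : Subgroup H)
    (hφ1 : ∀ g ∈ G₁, (φ g) '' (H₁ : Set H) = (H₁ : Set H))
    (L : Subgroup H)
    (hL : L = Subgroup.closure
      ({x : H | ∃ g ∈ G₁, ∃ h ∈ H₂, x = φ g h * h⁻¹} ∪
       {x : H | ∃ g ∈ G₂, ∃ h ∈ H₁, x = φ g h * h⁻¹}))
    (P₁ P₂ P₃ : Subgroup (H ⋊[φ] G))
    (hP₁ : (P₁ : Set (H ⋊[φ] G)) = {x | x.left ∈ H₁ ∧ x.right ∈ G₁})
    (hP₂ : (P₂ : Set (H ⋊[φ] G)) = {x | x.left ∈ H₂ ∧ x.right ∈ G₂})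
    (hP₃ : (P₃ : Set (H ⋊[φ] G)) = {x | x.left ∈ L ∧ x.right ∈ ⁅G₁, G₂⁆}) :
    (∀ g ∈ ⁅G₁, G₂⁆, (φ g) '' (L : Set H) = (L : Set H)) ∧ ⁅P₁, P₂⁆ = P₃ := by
  have hH₁ : ∀ g ∈ G₁, ∀ h ∈ H₁, φ g h ∈ H₁ := fun g hg h hh =>
    (hφ1 g hg).subset (Set.mem_image_of_mem _ hh)
  obtain rfl : L = mixedCommutator φ G₁ H₁ G₂ H₂ := by
    rw [hL, Subgroup.closure_union]
    rfl
  refine ⟨fun g hg => ?_, (commutator_le_of_coe_eq hH₁ hP₁ hP₂ hP₃).antisymm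
    (le_commutator_of_coe_eq hP₁ hP₂ hP₃)⟩
  exact image_eq_of_forall_apply_mem (fun _ hg' _ hx => apply_mem_mixedCommutator hH₁ hg' hx)
    (Subgroup.commutator_le_left G₁ G₂ hg)

/-- commutator of sub-semidirect-products: with `L` the subgroup generated by
`{φ(g₁)(h₂)h₂⁻¹} ∪ {φ(g₂)(h₁)h₁⁻¹}`, one has `φ(g)(L) = L` for `g ∈ [G₁,G₂]`, and
`[H₁ ⋊ G₁, H₂ ⋊ G₂] = L ⋊ [G₁,G₂]` inside `H ⋊[φ] G`. -/
theorem commutator_of_semidirect_products (G : Type*) [Group G] (H : Type*) [CommGroup H]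
    (φ : G →* MulAut H) (G₁ G₂ : Subgroup G) [G₁.Normal] [G₂.Normal]
    (H₁ H₂ : Subgroup H)
    (hφ1 : ∀ g ∈ G₁, (φ g) '' (H₁ : Set H) = (H₁ : Set H))
    (hφ2 : ∀ g ∈ G₂, (φ g) '' (H₂ : Set H) = (H₂ : Set H))
    (L : Subgroup H)
    (hL : L = Subgroup.closure
      ({x : H | ∃ g ∈ G₁, ∃ h ∈ H₂, x = φ g h * h⁻¹} ∪
       {x : H | ∃ g ∈ G₂, ∃ h ∈ H₁, x = φ g h * h⁻¹}))
    (P₁ P₂ P₃ : Subgroup (H ⋊[φ] G))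
    (hP₁ : (P₁ : Set (H ⋊[φ] G)) = {x | x.left ∈ H₁ ∧ x.right ∈ G₁})
    (hP₂ : (P₂ : Set (H ⋊[φ] G)) = {x | x.left ∈ H₂ ∧ x.right ∈ G₂})
    (hP₃ : (P₃ : Set (H ⋊[φ] G)) = {x | x.left ∈ L ∧ x.right ∈ ⁅G₁, G₂⁆}) :
    (∀ g ∈ ⁅G₁, G₂⁆, (φ g) '' (L : Set H) = (L : Set H)) ∧ ⁅P₁, P₂⁆ = P₃ :=
  commutator_of_semidirect_products_general G H φ G₁ G₂ H₁ H₂ hφ1 L hL P₁ P₂ P₃ hP₁ hP₂ hP₃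

end RiordanPaper
end
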